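/- Every maximal dissipative operator on a Hilbert space is densely defined. -/
import Mathlib


open scoped InnerProductSpace

/-- Every maximal dissipative operator on a Hilbert space is densely defined. -/
theorem maximal_dissipative_densely_defined
    {X : Type*} [NormedAddCommGroup X] [InnerProductSpace ℝ X] [CompleteSpace X]
    (A : X →ₗ.[ℝ] X)
    (hdiss : ∀ x : A.domain, ⟪A x, (x : X)⟫_ℝ ≤ 0)
    (hmax : ∀ y : X, ∃ x : A.domain, (x : X) - A x = y) :
    Dense (A.domain : Set X) := by
  rw [Submodule.dense_iff_topologicalClosure_eq_top]
  rw [Submodule.topologicalClosure_eq_top_iff]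
  rw [Submodule.eq_bot_iff]
  intro z hz
  obtain ⟨x, hx⟩ := hmax z
  have hzx : ⟪(x : X), z⟫_ℝ = 0 := hz (x : X) x.2
  rw [← hx, real_inner_comm, inner_sub_left, real_inner_self_eq_norm_sq] at hzx
  have hx0 : (x : X) = 0 := by
    have h1 : ‖(x : X)‖ ^ 2 ≤ 0 := by
      have := hdiss x
      nlinarith [hzx]
    have : ‖(x : X)‖ = 0 := by nlinarith [norm_nonneg (x : X)]
    exact norm_eq_zero.mp this
  have hxz : x = 0 := Subtype.ext hx0
  rw [← hx, hxz]
  simp
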